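/- arXiv:2111.11521 — 4 statements merged into one kernel-verified Lean document; each statement's English description precedes it below -/
import Mathlib

section
/- Let d be a positive integer and T ∈ (0,1]. Let A : [0,T] → Mat_{d×d}(ℝ) and λ : [0,T] → ℝ be continuous with ⟨v, A(t)v⟩ ≤ λ(t)|v|² for all t ∈ [0,T] and v ∈ ℝ^d, and let u : [0,T] → ℝ^d be continuous. If α : [0,T] → ℝ^d is differentiable with α(0) = 0 and α'(t) = u(t) + A(t)α(t) for all t ∈ [0,T], then for every t ∈ [0,T]: |α(t)|² ≤ (∫₀ᵗ e^{2∫ₛᵗ λ(r) dr} ds)·(∫₀ᵗ |u(s)|² ds). -/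
open MeasureTheory Real Set
open scoped RealInnerProductSpace

noncomputable section

/-- The action of a `d × d` matrix on `ℝ^d`. -/
def matVec {d : ℕ} (M : Matrix (Fin d) (Fin d) ℝ) (v : EuclideanSpace ℝ (Fin d)) :
    EuclideanSpace ℝ (Fin d) :=
  (WithLp.equiv 2 (Fin d → ℝ)).symm (M.mulVec (WithLp.equiv 2 (Fin d → ℝ) v))

lemma matVec_contOn {d : ℕ} {A : ℝ → Matrix (Fin d) (Fin d) ℝ}
    {v : ℝ → EuclideanSpace ℝ (Fin d)} {s : Set ℝ}
    (hA : ContinuousOn A s) (hv : ContinuousOn v s) :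
    ContinuousOn (fun t => matVec (A t) (v t)) s := by
  have hv' : ContinuousOn (fun t => (WithLp.equiv 2 (Fin d → ℝ)) (v t)) s :=
    (PiLp.continuous_ofLp _ _).comp_continuousOn hv
  have h1 : ContinuousOn (fun t => (A t).mulVec (WithLp.equiv 2 (Fin d → ℝ) (v t))) s := by
    apply continuousOn_pi.2
    intro i
    simp only [Matrix.mulVec, dotProduct]
    apply continuousOn_finset_sum
    intro j _
    exact (((continuous_apply j).comp (continuous_apply i)).comp_continuousOn hA).mul
      ((continuous_apply j).comp_continuousOn hv')
  exact (PiLp.continuous_toLp _ _).comp_continuousOn h1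

lemma memLp_two_of_contOn {f : ℝ → ℝ} {a b : ℝ} (h : ContinuousOn f (Icc a b)) :
    MemLp f (ENNReal.ofReal 2) (volume.restrict (Ioc a b)) := by
  haveI : Fact (volume (Ioc a b) < ⊤) := ⟨measure_Ioc_lt_top⟩
  obtain ⟨C, hC⟩ := isCompact_Icc.exists_bound_of_continuousOn h
  refine MemLp.of_bound ((h.mono Ioc_subset_Icc_self).aestronglyMeasurable measurableSet_Ioc) C ?_
  filter_upwards [ae_restrict_mem measurableSet_Ioc] with x hx
  exact hC x (Ioc_subset_Icc_self hx)

theorem stmt5 (d : ℕ) (hd : 0 < d) (T : ℝ) (hT : T ∈ Set.Ioc (0 : ℝ) 1)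
    (A : ℝ → Matrix (Fin d) (Fin d) ℝ) (lam : ℝ → ℝ)
    (u α : ℝ → EuclideanSpace ℝ (Fin d))
    (hA : ContinuousOn A (Set.Icc 0 T)) (hlam : ContinuousOn lam (Set.Icc 0 T))
    (hu : ContinuousOn u (Set.Icc 0 T))
    (hAlam : ∀ t ∈ Set.Icc (0 : ℝ) T, ∀ v : EuclideanSpace ℝ (Fin d),
      ⟪v, matVec (A t) v⟫ ≤ lam t * ‖v‖ ^ 2)
    (hα0 : α 0 = 0)
    (hα : ∀ t ∈ Set.Icc (0 : ℝ) T,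
      HasDerivWithinAt α (u t + matVec (A t) (α t)) (Set.Icc 0 T) t) :
    ∀ t ∈ Set.Icc (0 : ℝ) T,
      ‖α t‖ ^ 2 ≤ (∫ s in (0 : ℝ)..t, Real.exp (2 * ∫ r in s..t, lam r)) *
        ∫ s in (0 : ℝ)..t, ‖u s‖ ^ 2 := by
  obtain ⟨hT0, hT1⟩ := hT
  have hαc : ContinuousOn α (Icc 0 T) := fun s hs => (hα s hs).continuousWithinAt
  have hfc : ContinuousOn (fun s => u s + matVec (A s) (α s)) (Icc 0 T) :=
    hu.add (matVec_contOn hA hαc)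
  set Lam : ℝ → ℝ := fun s => ∫ r in (0:ℝ)..s, lam r with hLamdef
  have hlamInt : ∀ a ∈ Icc (0:ℝ) T, ∀ b ∈ Icc (0:ℝ) T, IntervalIntegrable lam volume a b := by
    intro a ha b hb
    exact (hlam.mono (uIcc_subset_Icc ha hb)).intervalIntegrable
  have h0T : (0:ℝ) ∈ Icc (0:ℝ) T := left_mem_Icc.2 hT0.le
  have hLamD : ∀ s ∈ Icc (0:ℝ) T, HasDerivWithinAt Lam (lam s) (Icc 0 T) s := by
    intro s hs
    haveI : Fact (s ∈ Icc (0:ℝ) T) := ⟨hs⟩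
    exact intervalIntegral.integral_hasDerivWithinAt_right
      (hlamInt 0 h0T s hs)
      (hlam.stronglyMeasurableAtFilter_nhdsWithin measurableSet_Icc s)
      (hlam s hs)
  have hLamc : ContinuousOn Lam (Icc 0 T) := fun s hs => (hLamD s hs).continuousWithinAt
  set β : ℝ → ℝ := fun s => Real.exp (-Lam s) with hβdef
  have hβpos : ∀ s, 0 < β s := fun s => Real.exp_pos _
  have hβD : ∀ s ∈ Icc (0:ℝ) T, HasDerivWithinAt β (-lam s * β s) (Icc 0 T) s := by
    intro s hs
    have h := ((hLamD s hs).neg).exp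
    simpa [hβdef, mul_comm] using h
  have hβc : ContinuousOn β (Icc 0 T) := fun s hs => (hβD s hs).continuousWithinAt
  set γ : ℝ → EuclideanSpace ℝ (Fin d) := fun s => β s • α s with hγdef
  set γd : ℝ → EuclideanSpace ℝ (Fin d) :=
    fun s => β s • (u s + matVec (A s) (α s)) + (-lam s * β s) • α s with hγddef
  have hγD : ∀ s ∈ Icc (0:ℝ) T, HasDerivWithinAt γ (γd s) (Icc 0 T) s :=
    fun s hs => (hβD s hs).smul (hα s hs)
  have hγc : ContinuousOn γ (Icc 0 T) := hβc.smul hαc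
  have hγdc : ContinuousOn γd (Icc 0 T) :=
    (hβc.smul hfc).add (((hlam.neg).mul hβc).smul hαc)
  have hγnorm : ∀ s, ‖γ s‖ = β s * ‖α s‖ := by
    intro s
    simp [hγdef, norm_smul, abs_of_pos (hβpos s)]
  have hkey : ∀ s ∈ Icc (0:ℝ) T, ⟪γ s, γd s⟫ ≤ ‖γ s‖ * (β s * ‖u s‖) := by
    intro s hs
    have h1 : ⟪γ s, γd s⟫ = β s * β s * (⟪α s, u s⟫ + ⟪α s, matVec (A s) (α s)⟫)
        + (-lam s * (β s * β s)) * ‖α s‖^2 := by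
      simp only [hγdef, hγddef, inner_add_right, real_inner_smul_left, real_inner_smul_right,
        real_inner_self_eq_norm_sq]
      ring
    have h2 : ⟪α s, matVec (A s) (α s)⟫ ≤ lam s * ‖α s‖^2 := hAlam s hs (α s)
    have h3 : ⟪α s, u s⟫ ≤ ‖α s‖ * ‖u s‖ := real_inner_le_norm _ _
    have hb2 : (0:ℝ) < β s * β s := mul_pos (hβpos s) (hβpos s)
    calc ⟪γ s, γd s⟫
        = β s * β s * (⟪α s, u s⟫ + ⟪α s, matVec (A s) (α s)⟫)
            + (-lam s * (β s * β s)) * ‖α s‖^2 := h1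
      _ ≤ β s * β s * (‖α s‖ * ‖u s‖ + lam s * ‖α s‖^2)
            + (-lam s * (β s * β s)) * ‖α s‖^2 := by
          have := mul_le_mul_of_nonneg_left (add_le_add h3 h2) hb2.le
          linarith
      _ = (β s * ‖α s‖) * (β s * ‖u s‖) := by ring
      _ = ‖γ s‖ * (β s * ‖u s‖) := by rw [hγnorm s]
  intro t ht
  obtain ⟨ht0, htT⟩ := ht
  have htT' : t ∈ Icc (0:ℝ) T := ⟨ht0, htT⟩
  have hsub : Icc (0:ℝ) t ⊆ Icc 0 T := Icc_subset_Icc le_rfl htT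
  have hbuc : ContinuousOn (fun s => β s * ‖u s‖) (Icc 0 T) := hβc.mul hu.norm
  have hbuint : IntervalIntegrable (fun s => β s * ‖u s‖) volume 0 t := by
    apply ContinuousOn.intervalIntegrable
    rw [uIcc_of_le ht0]; exact hbuc.mono hsub
  have hγle : ‖γ t‖ ≤ ∫ s in (0:ℝ)..t, β s * ‖u s‖ := by
    apply le_of_forall_pos_le_add
    intro ε hε
    set ψ : ℝ → ℝ := fun s => Real.sqrt (‖γ s‖^2 + ε^2) with hψdef
    have hden : ∀ s, (0:ℝ) < ‖γ s‖^2 + ε^2 := fun s => by positivity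
    have hψpos : ∀ s, 0 < ψ s := fun s => Real.sqrt_pos.2 (hden s)
    set q : ℝ → ℝ := fun s => 2 * ⟪γ s, γd s⟫ / (2 * ψ s) with hqdef
    have hψD : ∀ s ∈ Icc (0:ℝ) T, HasDerivWithinAt ψ (q s) (Icc 0 T) s := by
      intro s hs
      have h1 : HasDerivWithinAt (fun y => ‖γ y‖^2 + ε^2) (2 * ⟪γ s, γd s⟫) (Icc 0 T) s :=
        ((hγD s hs).norm_sq).add_const _
      exact h1.sqrt (hden s).ne'
    have hγψ : ∀ s, ‖γ s‖ ≤ ψ s := by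
      intro s
      rw [hψdef]
      calc ‖γ s‖ = Real.sqrt (‖γ s‖^2) := by rw [Real.sqrt_sq (norm_nonneg _)]
        _ ≤ Real.sqrt (‖γ s‖^2 + ε^2) := Real.sqrt_le_sqrt (le_add_of_nonneg_right (by positivity))
    have hψc : ContinuousOn ψ (Icc 0 T) := fun s hs => (hψD s hs).continuousWithinAt
    have hqc : ContinuousOn q (Icc 0 T) := by
      apply ContinuousOn.div
      · exact continuousOn_const.mul (hγc.inner hγdc)
      · exact continuousOn_const.mul hψc
      · intro s _
        exact (mul_pos two_pos (hψpos s)).ne'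
    have hqint : IntervalIntegrable q volume 0 t := by
      apply ContinuousOn.intervalIntegrable
      rw [uIcc_of_le ht0]; exact hqc.mono hsub
    have hftc : ∫ s in (0:ℝ)..t, q s = ψ t - ψ 0 := by
      apply intervalIntegral.integral_eq_sub_of_hasDeriv_right_of_le ht0 (hψc.mono hsub) ?_ hqint
      intro x hx
      have hxT : x ∈ Ioo (0:ℝ) T := ⟨hx.1, lt_of_lt_of_le hx.2 htT⟩
      exact ((hψD x (Ioo_subset_Icc_self hxT)).hasDerivAt
        (Icc_mem_nhds hxT.1 hxT.2)).hasDerivWithinAt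
    have hmono : ∫ s in (0:ℝ)..t, q s ≤ ∫ s in (0:ℝ)..t, β s * ‖u s‖ := by
      apply intervalIntegral.integral_mono_on ht0 hqint hbuint
      intro s hs
      have hs' := hsub hs
      rw [hqdef]
      rw [div_le_iff₀ (mul_pos two_pos (hψpos s))]
      calc 2 * ⟪γ s, γd s⟫ ≤ 2 * (‖γ s‖ * (β s * ‖u s‖)) := by linarith [hkey s hs']
        _ ≤ 2 * (ψ s * (β s * ‖u s‖)) := by
            have := mul_le_mul_of_nonneg_right (hγψ s)
              (mul_nonneg (hβpos s).le (norm_nonneg (u s)))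
            linarith
        _ = β s * ‖u s‖ * (2 * ψ s) := by ring
    have hψ0 : ψ 0 = ε := by
      rw [hψdef]
      simp only [hγdef, hα0, smul_zero, norm_zero]
      rw [show (0:ℝ)^2 + ε^2 = ε^2 by ring, Real.sqrt_sq hε.le]
    calc ‖γ t‖ ≤ ψ t := hγψ t
      _ ≤ (∫ s in (0:ℝ)..t, β s * ‖u s‖) + ε := by
          rw [← hψ0]; linarith [hftc ▸ hmono]
  set g : ℝ → ℝ := fun s => Real.exp (∫ r in s..t, lam r) with hgdef
  have hgeq : ∀ s ∈ Icc (0:ℝ) t, Real.exp (Lam t) * β s = g s := by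
    intro s hs
    rw [hgdef, hβdef]
    simp only
    rw [← Real.exp_add]
    congr 1
    have h := intervalIntegral.integral_interval_sub_left
      (hlamInt 0 h0T t htT') (hlamInt 0 h0T s (hsub hs))
    rw [hLamdef]
    simp only
    rw [← h]
    ring
  have hαle : ‖α t‖ ≤ ∫ s in (0:ℝ)..t, g s * ‖u s‖ := by
    have h1 : ‖α t‖ = Real.exp (Lam t) * ‖γ t‖ := by
      rw [hγnorm t, hβdef]
      simp only
      rw [← mul_assoc, ← Real.exp_add]
      simp
    rw [h1]
    calc Real.exp (Lam t) * ‖γ t‖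
        ≤ Real.exp (Lam t) * ∫ s in (0:ℝ)..t, β s * ‖u s‖ :=
          mul_le_mul_of_nonneg_left hγle (Real.exp_pos _).le
      _ = ∫ s in (0:ℝ)..t, Real.exp (Lam t) * (β s * ‖u s‖) := by
          rw [intervalIntegral.integral_const_mul]
      _ = ∫ s in (0:ℝ)..t, g s * ‖u s‖ := by
          apply intervalIntegral.integral_congr
          intro s hs
          rw [uIcc_of_le ht0] at hs
          show Real.exp (Lam t) * (β s * ‖u s‖) = g s * ‖u s‖
          rw [← mul_assoc, hgeq s hs]
  have hgc : ContinuousOn g (Icc 0 t) :=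
    (continuousOn_const.mul (hβc.mono hsub)).congr fun s hs => (hgeq s hs).symm
  have huc' : ContinuousOn (fun s => ‖u s‖) (Icc 0 t) := (hu.mono hsub).norm
  have hCS : (∫ s in (0:ℝ)..t, g s * ‖u s‖) ^ 2
      ≤ (∫ s in (0:ℝ)..t, g s ^ 2) * ∫ s in (0:ℝ)..t, ‖u s‖ ^ 2 := by
    rw [intervalIntegral.integral_of_le ht0, intervalIntegral.integral_of_le ht0,
      intervalIntegral.integral_of_le ht0]
    set μ := volume.restrict (Ioc (0:ℝ) t) with hμdef
    have h2 : Real.HolderConjugate 2 2 := ⟨by norm_num, by norm_num, by norm_num⟩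
    have hg2 : MemLp g (ENNReal.ofReal 2) μ := memLp_two_of_contOn hgc
    have hu2 : MemLp (fun s => ‖u s‖) (ENNReal.ofReal 2) μ := memLp_two_of_contOn huc'
    have hH := integral_mul_le_Lp_mul_Lq_of_nonneg h2
      (Filter.Eventually.of_forall fun s => (Real.exp_pos _).le)
      (Filter.Eventually.of_forall fun s => norm_nonneg (u s)) hg2 hu2
    simp only [← Real.rpow_natCast _ 2] at hH ⊢
    push_cast at hH ⊢
    have hIA : (0:ℝ) ≤ ∫ s, g s ^ (2:ℝ) ∂μ :=
      integral_nonneg fun s => Real.rpow_nonneg (Real.exp_pos _).le _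
    have hIB : (0:ℝ) ≤ ∫ s, ‖u s‖ ^ (2:ℝ) ∂μ :=
      integral_nonneg fun s => Real.rpow_nonneg (norm_nonneg _) _
    have hI0 : (0:ℝ) ≤ ∫ s, g s * ‖u s‖ ∂μ :=
      integral_nonneg fun s => mul_nonneg (Real.exp_pos _).le (norm_nonneg _)
    calc (∫ s, g s * ‖u s‖ ∂μ) ^ (2:ℝ)
        ≤ ((∫ s, g s ^ (2:ℝ) ∂μ) ^ (1/2:ℝ) * (∫ s, ‖u s‖ ^ (2:ℝ) ∂μ) ^ (1/2:ℝ)) ^ (2:ℝ) := by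
          apply Real.rpow_le_rpow hI0 hH (by norm_num)
      _ = (∫ s, g s ^ (2:ℝ) ∂μ) * ∫ s, ‖u s‖ ^ (2:ℝ) ∂μ := by
          rw [← Real.sqrt_eq_rpow, ← Real.sqrt_eq_rpow, Real.rpow_two, mul_pow,
            Real.sq_sqrt hIA, Real.sq_sqrt hIB]
  have hg2eq : ∀ s, g s ^ 2 = Real.exp (2 * ∫ r in s..t, lam r) := by
    intro s
    rw [hgdef]
    simp only
    rw [sq, ← Real.exp_add]
    ring_nf
  calc ‖α t‖ ^ 2 ≤ (∫ s in (0:ℝ)..t, g s * ‖u s‖) ^ 2 :=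
        pow_le_pow_left₀ (norm_nonneg _) hαle 2
    _ ≤ (∫ s in (0:ℝ)..t, g s ^ 2) * ∫ s in (0:ℝ)..t, ‖u s‖ ^ 2 := hCS
    _ = (∫ s in (0:ℝ)..t, Real.exp (2 * ∫ r in s..t, lam r)) * ∫ s in (0:ℝ)..t, ‖u s‖ ^ 2 := by
        congr 1
        apply intervalIntegral.integral_congr
        intro s _
        exact hg2eq s
end
end

section
/- Let (Ω, 𝔽, P) be a probability space, let r₀ ∈ (0,1], and let τ : Ω → (0, r₀] be a random variable. Let m be a positive integer, b > 0 and c ≥ 0, and suppose P[1/τ ≥ r] ≤ c·e^{−b·r} for all r ≥ 1/r₀. Then E[τ^{−m}] ≤ r₀^{−m}·(1 + (b^{−m} + 1)·m!·m·c·e^{−b/r₀}). -/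
open MeasureTheory Real Set
open scoped ENNReal

noncomputable section

lemma aux_int {b : ℝ} (hb : 0 < b) (k : ℕ) :
    IntegrableOn (fun s : ℝ => s ^ k * Real.exp (-(b * s))) (Ioi 0) ∧
    ∫ s in Ioi (0:ℝ), s ^ k * Real.exp (-(b * s)) = (k.factorial : ℝ) * (b ^ (k+1))⁻¹ := by
  constructor
  · have h := integrableOn_rpow_mul_exp_neg_mul_rpow (p := 1) (s := (k:ℝ)) (b := b)
      (lt_of_lt_of_le (by norm_num) (Nat.cast_nonneg k)) one_pos hb
    simpa [Real.rpow_natCast, Real.rpow_one, neg_mul] using h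
  · have h := integral_rpow_mul_exp_neg_mul_Ioi (a := (k:ℝ)+1) (r := b) (by positivity) hb
    have h2 : ∀ t ∈ Ioi (0:ℝ), t ^ ((k:ℝ)+1-1) * Real.exp (-(b*t)) = t ^ k * Real.exp (-(b*t)) := by
      intro t ht
      rw [add_sub_cancel_right, Real.rpow_natCast]
    rw [setIntegral_congr_fun measurableSet_Ioi h2] at h
    rw [h, Real.Gamma_nat_eq_factorial,
      show (k:ℝ)+1 = ((k+1:ℕ):ℝ) by push_cast; ring, Real.rpow_natCast, one_div, inv_pow]
    ring

lemma aux_J {b : ℝ} (hb : 0 < b) (n : ℕ) :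
    IntegrableOn (fun s : ℝ => (1+s)^n * Real.exp (-(b*s))) (Ioi 0) ∧
    ∫ s in Ioi (0:ℝ), (1+s)^n * Real.exp (-(b*s)) ≤
      ((n+1) * n.factorial : ℝ) * ((b^(n+1))⁻¹ + 1) := by
  have hfun : (fun s : ℝ => (1+s)^n * Real.exp (-(b*s))) =
      fun s => ∑ k ∈ Finset.range (n+1), (n.choose k : ℝ) * (s^k * Real.exp (-(b*s))) := by
    funext s
    rw [add_comm, add_pow, Finset.sum_mul]
    refine Finset.sum_congr rfl fun k _ => ?_
    ring
  have hint : ∀ k ∈ Finset.range (n+1),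
      IntegrableOn (fun s : ℝ => (n.choose k : ℝ) * (s^k * Real.exp (-(b*s)))) (Ioi 0) :=
    fun k _ => ((aux_int hb k).1.const_mul _)
  constructor
  · rw [hfun]
    exact integrable_finset_sum _ hint
  · rw [hfun, integral_finset_sum _ hint]
    have hterm : ∀ k ∈ Finset.range (n+1),
        ∫ s in Ioi (0:ℝ), (n.choose k : ℝ) * (s^k * Real.exp (-(b*s))) ≤
          (n.factorial : ℝ) * ((b^(n+1))⁻¹ + 1) := by
      intro k hk
      rw [Finset.mem_range, Nat.lt_succ_iff] at hk
      rw [MeasureTheory.integral_const_mul, (aux_int hb k).2, ← mul_assoc]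
      have c1n : n.choose k * k.factorial ≤ n.factorial := by
        calc n.choose k * k.factorial ≤ n.choose k * k.factorial * (n-k).factorial :=
              Nat.le_mul_of_pos_right _ (Nat.factorial_pos _)
          _ = n.factorial := Nat.choose_mul_factorial_mul_factorial hk
      have c1 : (n.choose k * k.factorial : ℝ) ≤ (n.factorial : ℝ) := by exact_mod_cast c1n
      have c2 : (b^(k+1))⁻¹ ≤ (b^(n+1))⁻¹ + 1 := by
        rcases le_total b 1 with hb1 | hb1
        · have : b^(n+1) ≤ b^(k+1) := pow_le_pow_of_le_one hb.le hb1 (by omega)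
          have h3 : (b^(k+1))⁻¹ ≤ (b^(n+1))⁻¹ :=
            inv_anti₀ (by positivity) this
          linarith
        · have h1 : (1:ℝ) ≤ b^(k+1) := one_le_pow₀ hb1
          have : (b^(k+1))⁻¹ ≤ 1 := inv_le_one_of_one_le₀ h1
          have : (0:ℝ) ≤ (b^(n+1))⁻¹ := by positivity
          linarith
      exact mul_le_mul c1 c2 (by positivity) (by positivity)
    calc ∑ k ∈ Finset.range (n+1), ∫ s in Ioi (0:ℝ), (n.choose k : ℝ) * (s^k * Real.exp (-(b*s)))
        ≤ ∑ k ∈ Finset.range (n+1), (n.factorial : ℝ) * ((b^(n+1))⁻¹ + 1) :=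
          Finset.sum_le_sum hterm
      _ = ((n+1) * n.factorial : ℝ) * ((b^(n+1))⁻¹ + 1) := by
          simp [Finset.sum_const, Finset.card_range]; push_cast; ring

set_option maxHeartbeats 1000000 in
theorem stmt15 {Ω : Type*} [MeasurableSpace Ω] (P : Measure Ω) [IsProbabilityMeasure P]
    (r₀ : ℝ) (hr₀ : r₀ ∈ Set.Ioc (0 : ℝ) 1)
    (τ : Ω → ℝ) (hτ_meas : Measurable τ) (hτ : ∀ ω, τ ω ∈ Set.Ioc (0 : ℝ) r₀)
    (m : ℕ) (hm : 0 < m) (b c : ℝ) (hb : 0 < b) (hc : 0 ≤ c)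
    (htail : ∀ r : ℝ, 1 / r₀ ≤ r →
      P {ω | r ≤ 1 / τ ω} ≤ ENNReal.ofReal (c * Real.exp (-(b * r)))) :
    ∫⁻ ω, ENNReal.ofReal ((τ ω ^ m)⁻¹) ∂P ≤
      ENNReal.ofReal ((r₀ ^ m)⁻¹ *
        (1 + ((b ^ m)⁻¹ + 1) * (Nat.factorial m) * m * c * Real.exp (-(b / r₀)))) := by
  obtain ⟨hr0pos, hr01⟩ := hr₀
  set a : ℝ := r₀⁻¹ with ha_def
  have ha0 : 0 < a := by positivity
  have ha1 : 1 ≤ a := (one_le_inv₀ hr0pos).mpr hr01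
  set X : Ω → ℝ := fun ω => (τ ω)⁻¹ with hX_def
  have hX_meas : Measurable X := hτ_meas.inv
  have hXa : ∀ ω, a ≤ X ω := fun ω => inv_anti₀ (hτ ω).1 (hτ ω).2
  have hX0 : ∀ ω, 0 ≤ X ω := fun ω => le_trans ha0.le (hXa ω)
  set n : ℕ := m - 1 with hn_def
  have hnm : n + 1 = m := Nat.succ_pred_eq_of_pos hm
  have hmR : ((m:ℝ)) ≠ 0 := Nat.cast_ne_zero.mpr hm.ne'
  have hcast : ((n:ℝ)+1) = (m:ℝ) := by exact_mod_cast congrArg Nat.cast hnm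
  -- step 1 : layer cake
  have hlayer : ∫⁻ ω, ENNReal.ofReal ((τ ω ^ m)⁻¹) ∂P
      = ∫⁻ t in Ioi (0:ℝ), P {ω | t ≤ X ω} * ENNReal.ofReal ((m:ℝ) * t ^ n) := by
    have h := lintegral_comp_eq_lintegral_meas_le_mul P (f := X)
      (g := fun t : ℝ => (m:ℝ) * t ^ n)
      (Filter.Eventually.of_forall hX0) hX_meas.aemeasurable
      (fun t _ => (intervalIntegral.intervalIntegrable_pow n).const_mul _)
      (by
        filter_upwards [self_mem_ae_restrict measurableSet_Ioi] with t ht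
        have : (0:ℝ) < t := ht
        positivity)
    rw [← h]
    refine lintegral_congr fun ω => ?_
    congr 1
    rw [intervalIntegral.integral_const_mul, integral_pow, hnm]
    rw [zero_pow hm.ne', ← inv_pow, hcast, sub_zero]
    field_simp
    simp [hX_def, one_div, inv_pow]
  rw [hlayer, ← Ioc_union_Ioi_eq_Ioi ha0.le,
    lintegral_union measurableSet_Ioi (Ioc_disjoint_Ioi le_rfl)]
  -- first piece
  have hcont : Continuous (fun t : ℝ => (m:ℝ) * t ^ n) := by continuity
  have hT1 : ∫⁻ t in Ioc (0:ℝ) a, P {ω | t ≤ X ω} * ENNReal.ofReal ((m:ℝ) * t ^ n)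
      ≤ ENNReal.ofReal (a ^ m) := by
    have step1 : ∫⁻ t in Ioc (0:ℝ) a, P {ω | t ≤ X ω} * ENNReal.ofReal ((m:ℝ) * t ^ n)
        ≤ ∫⁻ t in Ioc (0:ℝ) a, ENNReal.ofReal ((m:ℝ) * t ^ n) := by
      refine lintegral_mono fun t => ?_
      calc P {ω | t ≤ X ω} * ENNReal.ofReal ((m:ℝ) * t ^ n)
          ≤ 1 * ENNReal.ofReal ((m:ℝ) * t ^ n) := mul_le_mul_left prob_le_one _
        _ = ENNReal.ofReal ((m:ℝ) * t ^ n) := one_mul _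
    have hint : IntegrableOn (fun t : ℝ => (m:ℝ) * t ^ n) (Ioc 0 a) :=
      hcont.integrableOn_Ioc
    have heq : ∫⁻ t in Ioc (0:ℝ) a, ENNReal.ofReal ((m:ℝ) * t ^ n)
        = ENNReal.ofReal (∫ t in Ioc (0:ℝ) a, (m:ℝ) * t ^ n) := by
      rw [ofReal_integral_eq_lintegral_ofReal hint]
      filter_upwards [self_mem_ae_restrict measurableSet_Ioc] with t ht
      have h1 : (0:ℝ) < t := ht.1
      positivity
    have hval : ∫ t in Ioc (0:ℝ) a, (m:ℝ) * t ^ n = a ^ m := by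
      rw [← intervalIntegral.integral_of_le ha0.le,
        intervalIntegral.integral_const_mul, integral_pow, hnm, zero_pow hm.ne', hcast, sub_zero]
      field_simp
    rw [heq, hval] at step1
    exact step1
  -- second piece
  set D : ℝ := (m:ℝ) * c * a ^ n * Real.exp (-(b*a)) with hD_def
  have hD0 : 0 ≤ D := by positivity
  have hT2 : ∫⁻ t in Ioi a, P {ω | t ≤ X ω} * ENNReal.ofReal ((m:ℝ) * t ^ n)
      ≤ ENNReal.ofReal (D * (((n:ℝ)+1) * n.factorial * ((b^(n+1))⁻¹ + 1))) := by
    have step1 : ∫⁻ t in Ioi a, P {ω | t ≤ X ω} * ENNReal.ofReal ((m:ℝ) * t ^ n)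
        ≤ ∫⁻ t in Ioi a, ENNReal.ofReal (D * ((1+(t-a))^n * Real.exp (-(b*(t-a))))) := by
      refine setLIntegral_mono_ae (by fun_prop) (Filter.Eventually.of_forall fun t ht => ?_)
      have hta : a ≤ t := le_of_lt ht
      have ht0 : 0 < t := lt_of_lt_of_le ha0 hta
      have htail' : P {ω | t ≤ X ω} ≤ ENNReal.ofReal (c * Real.exp (-(b * t))) := by
        have h1 : 1 / r₀ ≤ t := by rw [one_div]; exact hta
        have := htail t h1
        simpa [hX_def, one_div] using this
      calc P {ω | t ≤ X ω} * ENNReal.ofReal ((m:ℝ) * t ^ n)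
          ≤ ENNReal.ofReal (c * Real.exp (-(b * t))) * ENNReal.ofReal ((m:ℝ) * t ^ n) :=
            mul_le_mul_left htail' _
        _ = ENNReal.ofReal ((c * Real.exp (-(b * t))) * ((m:ℝ) * t ^ n)) :=
            (ENNReal.ofReal_mul (by positivity)).symm
        _ ≤ ENNReal.ofReal (D * ((1+(t-a))^n * Real.exp (-(b*(t-a))))) := by
            apply ENNReal.ofReal_le_ofReal
            set s : ℝ := t - a with hs_def
            have hs0 : 0 ≤ s := sub_nonneg.mpr hta
            have hexp : Real.exp (-(b*t)) = Real.exp (-(b*a)) * Real.exp (-(b*s)) := by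
              rw [← Real.exp_add]; congr 1; rw [hs_def]; ring
            have htpow : t ^ n ≤ a ^ n * (1+s)^n := by
              rw [← mul_pow]
              apply pow_le_pow_left₀ ht0.le
              have : t = a + s := by rw [hs_def]; ring
              nlinarith
            calc c * Real.exp (-(b*t)) * ((m:ℝ) * t ^ n)
                = (c * (m:ℝ)) * (t ^ n * (Real.exp (-(b*a)) * Real.exp (-(b*s)))) := by
                  rw [hexp]; ring
              _ ≤ (c * (m:ℝ)) * ((a ^ n * (1+s)^n) * (Real.exp (-(b*a)) * Real.exp (-(b*s)))) := by
                  apply mul_le_mul_of_nonneg_left _ (by positivity)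
                  apply mul_le_mul_of_nonneg_right htpow (by positivity)
              _ = D * ((1+s)^n * Real.exp (-(b*s))) := by rw [hD_def]; ring
    have step2 : ∫⁻ t in Ioi a, ENNReal.ofReal (D * ((1+(t-a))^n * Real.exp (-(b*(t-a)))))
        = ∫⁻ s in Ioi (0:ℝ), ENNReal.ofReal (D * ((1+s)^n * Real.exp (-(b*s)))) := by
      have hmp : MeasurePreserving (fun s : ℝ => s + a) volume volume :=
        measurePreserving_add_right volume a
      have hemb : MeasurableEmbedding (fun s : ℝ => s + a) :=
        (MeasurableEquiv.addRight a).measurableEmbedding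
      have h := hmp.setLIntegral_comp_preimage_emb hemb
        (fun t => ENNReal.ofReal (D * ((1+(t-a))^n * Real.exp (-(b*(t-a)))))) (Ioi a)
      have hpre : (fun s : ℝ => s + a) ⁻¹' (Ioi a) = Ioi (0:ℝ) := by
        ext s; simp [lt_add_iff_pos_left]
      rw [hpre] at h
      rw [← h]
      refine lintegral_congr fun s => ?_
      simp
    have step3 : ∫⁻ s in Ioi (0:ℝ), ENNReal.ofReal (D * ((1+s)^n * Real.exp (-(b*s))))
        ≤ ENNReal.ofReal (D * (((n:ℝ)+1) * n.factorial * ((b^(n+1))⁻¹ + 1))) := by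
      have hint : IntegrableOn (fun s : ℝ => D * ((1+s)^n * Real.exp (-(b*s)))) (Ioi 0) :=
        (aux_J hb n).1.const_mul D
      rw [← ofReal_integral_eq_lintegral_ofReal hint (by
        filter_upwards [self_mem_ae_restrict measurableSet_Ioi] with s hs
        have : (0:ℝ) < s := hs
        positivity)]
      apply ENNReal.ofReal_le_ofReal
      rw [MeasureTheory.integral_const_mul]
      exact mul_le_mul_of_nonneg_left (aux_J hb n).2 hD0
    exact le_trans step1 (le_of_eq step2 |>.trans step3)
  refine le_trans (add_le_add hT1 hT2) ?_
  rw [← ENNReal.ofReal_add (by positivity) (by positivity)]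
  apply ENNReal.ofReal_le_ofReal
  -- final arithmetic
  have hfact : (m.factorial : ℝ) = ((n:ℝ)+1) * n.factorial := by
    rw [← hnm, Nat.factorial_succ]; push_cast; ring
  have hexp2 : Real.exp (-(b/r₀)) = Real.exp (-(b*a)) := by
    rw [ha_def, div_eq_mul_inv]
  have ham : a ^ m = (r₀ ^ m)⁻¹ := by rw [ha_def, inv_pow]
  have han : a ^ n ≤ a ^ m := pow_le_pow_right₀ ha1 (Nat.sub_le m 1)
  have hbm : b ^ (n+1) = b ^ m := by rw [hnm]
  rw [← ham, hexp2, hbm, hfact]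
  have hE : 0 ≤ ((n:ℝ)+1) * n.factorial * ((b^m)⁻¹ + 1) * (m:ℝ) * c * Real.exp (-(b*a)) := by
    positivity
  calc a ^ m + D * (((n:ℝ)+1) * n.factorial * ((b^m)⁻¹ + 1))
      = a ^ m + a ^ n * ((m:ℝ) * c * Real.exp (-(b*a)) * (((n:ℝ)+1) * n.factorial * ((b^m)⁻¹ + 1))) := by
        rw [hD_def]; ring
    _ ≤ a ^ m + a ^ m * ((m:ℝ) * c * Real.exp (-(b*a)) * (((n:ℝ)+1) * n.factorial * ((b^m)⁻¹ + 1))) := by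
        have : (0:ℝ) ≤ (m:ℝ) * c * Real.exp (-(b*a)) * (((n:ℝ)+1) * n.factorial * ((b^m)⁻¹ + 1)) := by positivity
        nlinarith
    _ = a ^ m * (1 + ((b^m)⁻¹ + 1) * (((n:ℝ)+1) * n.factorial) * m * c * Real.exp (-(b*a))) := by
        ring
end
end

section
/- There exists a constant c > 0 with the following property: for every σ ≥ 1, every ε ∈ (0, c), and every continuous function g : [0,1−ε] → ℝ satisfying −1/(1−t) ≤ g(t) ≤ 0 for all t ∈ [0,1−ε], and −1/(2(1−t)) − 1/(1−t+σ) ≤ g(t) ≤ −1/(8(1−t)) for all t ∈ [ε,1−ε], one has ∫₀^{1−ε} (1 + g(t)·∫₀ᵗ e^{∫ₛᵗ g(r) dr} ds)² dt ≥ c·log(1/ε). -/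
open MeasureTheory Real Set

noncomputable section

private lemma sqrt_eq_exp_half_log {x : ℝ} (hx : 0 < x) :
    Real.sqrt x = Real.exp (1 / 2 * Real.log x) := by
  rw [Real.sqrt_eq_rpow, Real.rpow_def_of_pos hx, mul_comm]

set_option maxHeartbeats 2000000 in
theorem stmt18 :
    ∃ c : ℝ, 0 < c ∧
      ∀ σ : ℝ, 1 ≤ σ →
        ∀ ε : ℝ, ε ∈ Set.Ioo (0 : ℝ) c →
          ∀ g : ℝ → ℝ, ContinuousOn g (Set.Icc 0 (1 - ε)) →
            (∀ t ∈ Set.Icc (0 : ℝ) (1 - ε), -(1 / (1 - t)) ≤ g t ∧ g t ≤ 0) →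
            (∀ t ∈ Set.Icc ε (1 - ε),
              -1 / (2 * (1 - t)) - 1 / (1 - t + σ) ≤ g t ∧ g t ≤ -1 / (8 * (1 - t))) →
            c * Real.log (1 / ε) ≤
              ∫ t in (0 : ℝ)..(1 - ε),
                (1 + g t * ∫ s in (0 : ℝ)..t, Real.exp (∫ r in s..t, g r)) ^ 2 := by
  refine ⟨1 / 1000000000, by norm_num, ?_⟩
  intro σ hσ ε hε g hg h1 h2
  obtain ⟨hε0, hεc⟩ := hε
  set a : ℝ := 1 - ε with ha
  have hεs : ε < 1 / 1000000000 := hεc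
  have h0a : (0 : ℝ) ≤ a := by rw [ha]; linarith
  have hεa : ε ≤ a := by rw [ha]; linarith
  set t₀ : ℝ := 1 - 1 / 1600 with ht₀def
  have ht₀a : t₀ ≤ a := by rw [ht₀def, ha]; linarith
  have h0t₀ : (0 : ℝ) ≤ t₀ := by rw [ht₀def]; norm_num
  -- interval integrability of g on subintervals of [0, a]
  have hgint : ∀ s t : ℝ, s ∈ Icc (0:ℝ) a → t ∈ Icc (0:ℝ) a →
      IntervalIntegrable g volume s t := fun s t hs ht =>
    (hg.mono (uIcc_subset_Icc hs ht)).intervalIntegrable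
  set G : ℝ → ℝ := fun t => ∫ r in (0:ℝ)..t, g r with hGdef
  have hgIccInt : IntegrableOn g (Icc 0 a) volume := hg.integrableOn_Icc
  have hGcont : ContinuousOn G (Icc 0 a) := by
    have := intervalIntegral.continuousOn_primitive_interval
      (f := g) (μ := volume) (a := 0) (b := a) (by rwa [uIcc_of_le h0a])
    rwa [uIcc_of_le h0a] at this
  -- the inner exponential, as a function of s, for fixed t
  have hsub : ∀ s t : ℝ, s ∈ Icc (0:ℝ) a → t ∈ Icc (0:ℝ) a →
      (∫ r in s..t, g r) = G t - G s := by
    intro s t hs ht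
    exact (intervalIntegral.integral_interval_sub_left (hgint 0 t ⟨le_refl 0, h0a⟩ ht)
      (hgint 0 s ⟨le_refl 0, h0a⟩ hs)).symm
  have hexp : ∀ s t : ℝ, s ∈ Icc (0:ℝ) a → t ∈ Icc (0:ℝ) a →
      Real.exp (∫ r in s..t, g r) = Real.exp (G t) * Real.exp (-G s) := by
    intro s t hs ht
    rw [hsub s t hs ht, sub_eq_add_neg, Real.exp_add]
  -- continuous version of F
  set P : ℝ → ℝ := fun t => ∫ s in (0:ℝ)..t, Real.exp (-G s) with hPdef
  set Fc : ℝ → ℝ := fun t => Real.exp (G t) * P t with hFcdef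
  have hexpGcont : ContinuousOn (fun s => Real.exp (-G s)) (Icc 0 a) :=
    Real.continuous_exp.comp_continuousOn hGcont.neg
  have hPcont : ContinuousOn P (Icc 0 a) := by
    have := intervalIntegral.continuousOn_primitive_interval
      (f := fun s => Real.exp (-G s)) (μ := volume) (a := 0) (b := a)
      (by rw [uIcc_of_le h0a]; exact hexpGcont.integrableOn_Icc)
    rwa [uIcc_of_le h0a] at this
  have hFccont : ContinuousOn Fc (Icc 0 a) :=
    (Real.continuous_exp.comp_continuousOn hGcont).mul hPcont
  -- F = Fc on [0, a]
  have hFrep : ∀ t ∈ Icc (0:ℝ) a,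
      (∫ s in (0:ℝ)..t, Real.exp (∫ r in s..t, g r)) = Fc t := by
    intro t ht
    have : (∫ s in (0:ℝ)..t, Real.exp (∫ r in s..t, g r))
        = ∫ s in (0:ℝ)..t, Real.exp (G t) * Real.exp (-G s) := by
      apply intervalIntegral.integral_congr
      intro s hs
      rw [uIcc_of_le ht.1] at hs
      exact hexp s t ⟨hs.1, hs.2.trans ht.2⟩ ht
    rw [this, intervalIntegral.integral_const_mul]
  set Hc : ℝ → ℝ := fun t => (1 + g t * Fc t) ^ 2 with hHcdef
  have hHccont : ContinuousOn Hc (Icc 0 a) :=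
    ((continuousOn_const.add (hg.mul hFccont)).pow 2)
  -- rewrite the main integral
  have hmain : (∫ t in (0:ℝ)..a,
      (1 + g t * ∫ s in (0:ℝ)..t, Real.exp (∫ r in s..t, g r)) ^ 2)
      = ∫ t in (0:ℝ)..a, Hc t := by
    apply intervalIntegral.integral_congr
    intro t ht
    rw [uIcc_of_le h0a] at ht
    simp only [hFrep t ht]
    rfl
  -- key pointwise lower bound on [t₀, a]
  have hkey : ∀ t ∈ Icc t₀ a, 1 / (324 * (1 - t)) ≤ Hc t := by
    intro t ht
    obtain ⟨htt₀, hta⟩ := ht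
    have hεt : ε ≤ t := by rw [ht₀def] at htt₀; linarith
    have h1tpos : 0 < 1 - t := by rw [ha] at hta; linarith
    have h1tle : 1 - t ≤ 1 / 1600 := by rw [ht₀def] at htt₀; linarith
    have htmem : t ∈ Icc (0:ℝ) a := ⟨le_trans h0t₀ htt₀, hta⟩
    set S := Real.sqrt (1 - t) with hSdef
    have hSpos : 0 < S := Real.sqrt_pos.mpr h1tpos
    have hSsq : S ^ 2 = 1 - t := Real.sq_sqrt h1tpos.le
    have hSle : S ≤ 1 / 40 := by
      have h' : S ≤ Real.sqrt (1 / 1600) := Real.sqrt_le_sqrt h1tle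
      rwa [show (1/1600:ℝ) = (1/40)^2 by norm_num, Real.sqrt_sq (by norm_num)] at h'
    -- lower bound for the exponential factor for s ∈ [ε, t]
    have hφ : ∀ s ∈ Icc ε t, 1 / 2 * (S / Real.sqrt (1 - s))
        ≤ Real.exp (G t) * Real.exp (-G s) := by
      intro s hs
      have hsmem : s ∈ Icc (0:ℝ) a := ⟨le_trans hε0.le hs.1, hs.2.trans hta⟩
      have h1spos : 0 < 1 - s := lt_of_lt_of_le h1tpos (by linarith [hs.2])
      have h1sσ : 0 < 1 - s + σ := by linarith
      have h1tσ : 0 < 1 - t + σ := by linarith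
      rw [← hexp s t hsmem htmem]
      set u : ℝ → ℝ := fun r => 1 / 2 * Real.log (1 - r) + Real.log (1 - r + σ)
        with hudef
      have hderiv : ∀ r ∈ Icc s t,
          HasDerivAt u (-1 / (2 * (1 - r)) - 1 / (1 - r + σ)) r := by
        intro r hr
        have h1r : 0 < 1 - r := lt_of_lt_of_le h1tpos (by linarith [hr.2])
        have h1rσ : 0 < 1 - r + σ := by linarith
        have d1 : HasDerivAt (fun r : ℝ => 1 - r) (-1) r := by
          simpa using (hasDerivAt_id r).const_sub 1
        have d2 : HasDerivAt (fun r : ℝ => 1 - r + σ) (-1) r := by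
          simpa using d1.add_const σ
        have dl1 : HasDerivAt (fun r : ℝ => Real.log (1 - r)) ((1 - r)⁻¹ * (-1)) r :=
          (Real.hasDerivAt_log h1r.ne').comp r d1
        have dl2 : HasDerivAt (fun r : ℝ => Real.log (1 - r + σ)) ((1 - r + σ)⁻¹ * (-1)) r :=
          by have := (Real.hasDerivAt_log h1rσ.ne').comp r d2; exact this
        have := (dl1.const_mul (1/2 : ℝ)).add dl2
        refine this.congr_deriv ?_
        field_simp
        ring
      have hℓcont : ContinuousOn (fun r : ℝ => -1 / (2 * (1 - r)) - 1 / (1 - r + σ))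
          (Icc s t) := by
        apply ContinuousOn.sub
        · exact ContinuousOn.div continuousOn_const (by fun_prop) (fun r hr => by
            have h1r : 0 < 1 - r := lt_of_lt_of_le h1tpos (by linarith [hr.2])
            positivity)
        · exact ContinuousOn.div continuousOn_const (by fun_prop) (fun r hr => by
            have h1r : 0 < 1 - r := lt_of_lt_of_le h1tpos (by linarith [hr.2])
            positivity)
      have hintℓ : (∫ r in s..t, (-1 / (2 * (1 - r)) - 1 / (1 - r + σ))) = u t - u s := by
        apply intervalIntegral.integral_eq_sub_of_hasDerivAt
        · intro r hr
          rw [uIcc_of_le hs.2] at hr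
          exact hderiv r hr
        · exact (hℓcont.mono (by rw [uIcc_of_le hs.2])).intervalIntegrable
      have hmono : u t - u s ≤ ∫ r in s..t, g r := by
        rw [← hintℓ]
        apply intervalIntegral.integral_mono_on hs.2
          ((hℓcont.mono (by rw [uIcc_of_le hs.2])).intervalIntegrable)
          (hgint s t hsmem htmem)
        intro r hr
        exact (h2 r ⟨le_trans hs.1 hr.1, hr.2.trans hta⟩).1
      refine le_trans ?_ (Real.exp_le_exp.mpr hmono)
      have e1 : Real.exp (u t - u s)
          = S / Real.sqrt (1 - s) * ((1 - t + σ) / (1 - s + σ)) := by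
        rw [hudef]
        simp only
        rw [Real.exp_sub, Real.exp_add, Real.exp_add, Real.exp_log h1tσ,
          Real.exp_log h1sσ, hSdef, sqrt_eq_exp_half_log h1tpos,
          sqrt_eq_exp_half_log h1spos]
        rw [div_mul_div_comm]
      rw [e1]
      have hfac : (1:ℝ) / 2 ≤ (1 - t + σ) / (1 - s + σ) := by
        rw [le_div_iff₀ h1sσ]
        have hs0 : 0 ≤ s := le_trans hε0.le hs.1
        have ht1 : t ≤ 1 := by rw [ha] at hta; linarith
        linarith
      have hSd : 0 ≤ S / Real.sqrt (1 - s) := by positivity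
      calc 1 / 2 * (S / Real.sqrt (1 - s))
          ≤ (1 - t + σ) / (1 - s + σ) * (S / Real.sqrt (1 - s)) :=
            mul_le_mul_of_nonneg_right hfac hSd
        _ = S / Real.sqrt (1 - s) * ((1 - t + σ) / (1 - s + σ)) := by ring
    -- lower bound for Fc t
    have hFlow : 9 / 10 * S ≤ Fc t := by
      have hφcont : ContinuousOn (fun s => Real.exp (G t) * Real.exp (-G s)) (Icc 0 a) :=
        continuousOn_const.mul hexpGcont
      have hFeq : Fc t = ∫ s in (0:ℝ)..t, Real.exp (G t) * Real.exp (-G s) := by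
        rw [hFcdef]
        exact (intervalIntegral.integral_const_mul _ _).symm
      have hint1 : IntervalIntegrable (fun s => Real.exp (G t) * Real.exp (-G s)) volume 0 ε :=
        (hφcont.mono (uIcc_subset_Icc ⟨le_refl 0, h0a⟩ ⟨hε0.le, hεa⟩)).intervalIntegrable
      have hint2 : IntervalIntegrable (fun s => Real.exp (G t) * Real.exp (-G s)) volume ε t :=
        (hφcont.mono (uIcc_subset_Icc ⟨hε0.le, hεa⟩ htmem)).intervalIntegrable
      have hsplit : Fc t = (∫ s in (0:ℝ)..ε, Real.exp (G t) * Real.exp (-G s))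
          + ∫ s in ε..t, Real.exp (G t) * Real.exp (-G s) := by
        rw [hFeq, ← intervalIntegral.integral_add_adjacent_intervals hint1 hint2]
      have hfirst : 0 ≤ ∫ s in (0:ℝ)..ε, Real.exp (G t) * Real.exp (-G s) :=
        intervalIntegral.integral_nonneg hε0.le (fun s _ => by positivity)
      have hψcont : ContinuousOn (fun s : ℝ => 1 / 2 * (S / Real.sqrt (1 - s))) (Icc ε t) := by
        apply ContinuousOn.mul continuousOn_const
        apply ContinuousOn.div continuousOn_const
        · exact (Real.continuous_sqrt.comp (by fun_prop)).continuousOn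
        · intro s hs
          have h1spos : 0 < 1 - s := lt_of_lt_of_le h1tpos (by linarith [hs.2])
          positivity
      have hψint : IntervalIntegrable (fun s : ℝ => 1 / 2 * (S / Real.sqrt (1 - s)))
          volume ε t := (hψcont.mono (by rw [uIcc_of_le hεt])).intervalIntegrable
      have hsecond : (∫ s in ε..t, 1 / 2 * (S / Real.sqrt (1 - s)))
          ≤ ∫ s in ε..t, Real.exp (G t) * Real.exp (-G s) :=
        intervalIntegral.integral_mono_on hεt hψint hint2 hφ
      have hψval : (∫ s in ε..t, 1 / 2 * (S / Real.sqrt (1 - s)))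
          = S * Real.sqrt (1 - ε) - S * S := by
        have hcomp : (∫ s in ε..t, 1 / 2 * (S / Real.sqrt (1 - s)))
            = (-S * Real.sqrt (1 - t)) - (-S * Real.sqrt (1 - ε)) := by
          apply intervalIntegral.integral_eq_sub_of_hasDerivAt
          · intro s hs
            rw [uIcc_of_le hεt] at hs
            have h1spos : 0 < 1 - s := lt_of_lt_of_le h1tpos (by linarith [hs.2])
            have d1 : HasDerivAt (fun s : ℝ => 1 - s) (-1) s := by
              simpa using (hasDerivAt_id s).const_sub 1
            have dsq : HasDerivAt (fun s : ℝ => Real.sqrt (1 - s))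
                (1 / (2 * Real.sqrt (1 - s)) * (-1)) s :=
              (Real.hasDerivAt_sqrt h1spos.ne').comp s d1
            have := dsq.const_mul (-S)
            refine this.congr_deriv ?_
            have hssq : Real.sqrt (1 - s) ≠ 0 := by positivity
            field_simp
            all_goals ring
          · exact hψint
        rw [hcomp, ← hSdef]
        ring
      have hsqε : (99:ℝ) / 100 ≤ Real.sqrt (1 - ε) := by
        have h' : Real.sqrt ((99/100)^2) ≤ Real.sqrt (1 - ε) :=
          Real.sqrt_le_sqrt (by nlinarith)
        rwa [Real.sqrt_sq (by norm_num)] at h'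
      have : 9 / 10 * S ≤ S * Real.sqrt (1 - ε) - S * S := by nlinarith
      rw [hsplit]
      linarith [hsecond, hψval.symm.le]
    -- conclude the pointwise bound
    have hgt : g t ≤ -1 / (8 * (1 - t)) := (h2 t ⟨hεt, hta⟩).2
    have hg0 : g t ≤ 0 := (h1 t htmem).2
    have hmul1 : g t * Fc t ≤ g t * (9 / 10 * S) := mul_le_mul_of_nonpos_left hFlow hg0
    have hmul2 : g t * (9 / 10 * S) ≤ -1 / (8 * (1 - t)) * (9 / 10 * S) :=
      mul_le_mul_of_nonneg_right hgt (by positivity)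
    have hv : -1 / (8 * (1 - t)) * (9 / 10 * S) = -(9 / (80 * S)) := by
      rw [← hSsq]
      field_simp
      ring
    have h80 : g t * Fc t * S ≤ -(9 / 80) := by
      have hle : g t * Fc t ≤ -(9 / (80 * S)) := by
        rw [← hv]; exact le_trans hmul1 hmul2
      calc g t * Fc t * S ≤ -(9 / (80 * S)) * S := mul_le_mul_of_nonneg_right hle hSpos.le
        _ = -(9 / 80) := by
          field_simp
    have hXS : (1 + g t * Fc t) * S ≤ -(1 / 18) := by nlinarith
    have hsq : 1 / 324 ≤ ((1 + g t * Fc t) * S) ^ 2 := by nlinarith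
    have hprod : 1 / 324 ≤ (1 + g t * Fc t) ^ 2 * (1 - t) := by
      rw [← hSsq]
      nlinarith [hsq]
    show 1 / (324 * (1 - t)) ≤ (1 + g t * Fc t) ^ 2
    rw [div_le_iff₀ (by positivity)]
    nlinarith [hprod]
  -- assemble
  have hHint1 : IntervalIntegrable Hc volume 0 t₀ :=
    (hHccont.mono (uIcc_subset_Icc ⟨le_refl 0, h0a⟩ ⟨h0t₀, ht₀a⟩)).intervalIntegrable
  have hHint2 : IntervalIntegrable Hc volume t₀ a :=
    (hHccont.mono (uIcc_subset_Icc ⟨h0t₀, ht₀a⟩ ⟨h0a, le_refl a⟩)).intervalIntegrable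
  have hqcont : ContinuousOn (fun t : ℝ => 1 / (324 * (1 - t))) (Icc t₀ a) := by
    apply ContinuousOn.div continuousOn_const (by fun_prop)
    intro t ht
    have : 0 < 1 - t := by rw [ha] at ht; have := ht.2; nlinarith [ht.2]
    positivity
  have hqint : IntervalIntegrable (fun t : ℝ => 1 / (324 * (1 - t))) volume t₀ a :=
    (hqcont.mono (by rw [uIcc_of_le ht₀a])).intervalIntegrable
  have h5 : (∫ t in t₀..a, 1 / (324 * (1 - t))) ≤ ∫ t in t₀..a, Hc t :=
    intervalIntegral.integral_mono_on ht₀a hqint hHint2 hkey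
  have h6 : (∫ t in t₀..a, 1 / (324 * (1 - t)))
      = -(1/324) * Real.log (1 - a) - -(1/324) * Real.log (1 - t₀) := by
    apply intervalIntegral.integral_eq_sub_of_hasDerivAt
      (f := fun r : ℝ => -(1/324) * Real.log (1 - r))
    · intro r hr
      rw [uIcc_of_le ht₀a] at hr
      have h1r : 0 < 1 - r := by
        have := hr.2; rw [ha] at this; linarith
      have d1 : HasDerivAt (fun r : ℝ => 1 - r) (-1) r := by
        simpa using (hasDerivAt_id r).const_sub 1
      have dl : HasDerivAt (fun r : ℝ => Real.log (1 - r)) ((1 - r)⁻¹ * (-1)) r :=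
        (Real.hasDerivAt_log h1r.ne').comp r d1
      have := dl.const_mul (-(1/324) : ℝ)
      refine this.congr_deriv ?_
      field_simp
    · exact hqint
  have hεlog : Real.log (1 - a) = Real.log ε := by rw [ha]; ring_nf
  have ht₀log : Real.log (1 - t₀) = Real.log (1/1600) := by rw [ht₀def]; ring_nf
  have hLa : Real.log (1 / ε) = -Real.log ε := by rw [one_div, Real.log_inv]
  -- numeric facts
  have hexp20 : Real.exp 20 ≤ 1000000000 := by
    have h1 : Real.exp 20 = Real.exp 1 ^ (20:ℕ) := by
      rw [← Real.exp_nat_mul]; norm_num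
    have h2 : Real.exp 1 ^ (20:ℕ) ≤ 2.7182818286 ^ (20:ℕ) :=
      pow_le_pow_left₀ (Real.exp_pos 1).le Real.exp_one_lt_d9.le 20
    have h3 : (2.7182818286:ℝ) ^ (20:ℕ) ≤ 1000000000 := by norm_num
    linarith [h1.le, h2, h3]
  have hL20 : 20 ≤ Real.log (1 / ε) := by
    have h1e9 : (1000000000:ℝ) ≤ 1 / ε := by
      rw [le_div_iff₀ hε0]; linarith
    have := Real.log_le_log (by norm_num : (0:ℝ) < 1000000000) h1e9
    have h20 : (20:ℝ) ≤ Real.log 1000000000 :=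
      (Real.le_log_iff_exp_le (by norm_num)).mpr hexp20
    linarith
  have hlog1600 : Real.log 1600 ≤ 10 := by
    rw [Real.log_le_iff_le_exp (by norm_num)]
    have h1 : Real.exp 10 = Real.exp 1 ^ (10:ℕ) := by
      rw [← Real.exp_nat_mul]; norm_num
    have h2 : (2.7182818283:ℝ) ^ (10:ℕ) ≤ Real.exp 1 ^ (10:ℕ) :=
      pow_le_pow_left₀ (by norm_num) Real.exp_one_gt_d9.le 10
    have h3 : (1600:ℝ) ≤ (2.7182818283:ℝ) ^ (10:ℕ) := by norm_num
    linarith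
  have hlog1600' : Real.log (1/1600) = -Real.log 1600 := by
    rw [one_div, Real.log_inv]
  have hfinal : 1 / 1000000000 * Real.log (1 / ε)
      ≤ -(1/324) * Real.log (1 - a) - -(1/324) * Real.log (1 - t₀) := by
    rw [hεlog, ht₀log, hlog1600']
    have hlog1600nn : 0 ≤ Real.log 1600 := Real.log_nonneg (by norm_num)
    rw [hLa] at hL20 ⊢
    linarith
  have hpos1 : 0 ≤ ∫ t in (0:ℝ)..t₀, Hc t :=
    intervalIntegral.integral_nonneg h0t₀ (fun u _ => sq_nonneg _)
  have hadd : (∫ t in (0:ℝ)..a, Hc t)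
      = (∫ t in (0:ℝ)..t₀, Hc t) + ∫ t in t₀..a, Hc t :=
    (intervalIntegral.integral_add_adjacent_intervals hHint1 hHint2).symm
  rw [hmain, hadd]
  calc 1 / 1000000000 * Real.log (1 / ε)
      ≤ -(1/324) * Real.log (1 - a) - -(1/324) * Real.log (1 - t₀) := hfinal
    _ = ∫ t in t₀..a, 1 / (324 * (1 - t)) := h6.symm
    _ ≤ ∫ t in t₀..a, Hc t := h5
    _ ≤ (∫ t in (0:ℝ)..t₀, Hc t) + ∫ t in t₀..a, Hc t := by linarith [hpos1]
end
end

section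
/- Let κ > 0 and let φ : ℝ^d → ℝ be twice differentiable with 0 ⪯ ∇²φ(x) ⪯ κ^{−1/2}·Id_d for all x ∈ ℝ^d. Define O : C₀([0,1];ℝ^d) → C₀([0,1];ℝ^d) by O(ω)_t := ω_t + t·(∇φ(ω_1) − ω_1). Then for every ω ∈ C₀([0,1];ℝ^d) and every h ∈ H¹, the path O(ω + h) − O(ω) belongs to H¹ and |O(ω + h) − O(ω)|_{H¹} ≤ max(κ^{−1/2}, 1)·|h|_{H¹}. -/
open MeasureTheory Real Set
open scoped RealInnerProductSpace

noncomputable section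

/-- The transport map `O(ω)_t := ω_t + t·(∇φ(ω₁) − ω₁)` on path space. -/
def OTmap (d : ℕ) (φ : EuclideanSpace ℝ (Fin d) → ℝ)
    (ω : ℝ → EuclideanSpace ℝ (Fin d)) : ℝ → EuclideanSpace ℝ (Fin d) :=
  fun t => ω t + t • (gradient φ (ω 1) - ω 1)

section Aux

variable {E : Type*} [NormedAddCommGroup E] [InnerProductSpace ℝ E] [CompleteSpace E]

lemma grad_second_symm (φ : E → ℝ) (hφ : Differentiable ℝ φ)
    (hφ' : Differentiable ℝ (fun x => gradient φ x)) (x v w : E) :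
    ⟪fderiv ℝ (fun y => gradient φ y) x v, w⟫ = ⟪fderiv ℝ (fun y => gradient φ y) x w, v⟫ := by
  set A := fderiv ℝ (fun y => gradient φ y) x with hA
  set L := (InnerProductSpace.toDual ℝ E).toContinuousLinearEquiv.toContinuousLinearMap with hL
  have hf : ∀ y, HasFDerivAt φ (L (gradient φ y)) y := by
    intro y
    have : L (gradient φ y) = fderiv ℝ φ y := by
      simp [hL, gradient]
    rw [this]
    exact (hφ y).hasFDerivAt
  have hx : HasFDerivAt (fun y => L (gradient φ y)) (L.comp A) x :=
    L.hasFDerivAt.comp x (hφ' x).hasFDerivAt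
  have := second_derivative_symmetric hf hx v w
  simpa [hL, InnerProductSpace.toDual_apply_apply] using this

lemma grad_lipschitz (φ : E → ℝ) (hφ : Differentiable ℝ φ)
    (hφ' : Differentiable ℝ (fun x => gradient φ x)) {c : ℝ} (hc : 0 ≤ c)
    (hHess : ∀ x v : E, 0 ≤ ⟪v, fderiv ℝ (fun y => gradient φ y) x v⟫ ∧
      ⟪v, fderiv ℝ (fun y => gradient φ y) x v⟫ ≤ c * ‖v‖ ^ 2)
    (x y : E) : ‖gradient φ y - gradient φ x‖ ≤ c * ‖y - x‖ := by
  have key : ∀ z : E, ‖fderiv ℝ (fun y => gradient φ y) z‖ ≤ c := by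
    intro z
    set A := fderiv ℝ (fun y => gradient φ y) z with hA
    have symm : ∀ u v : E, ⟪u, A v⟫ = ⟪v, A u⟫ := fun u v =>
      (real_inner_comm (A v) u).trans
        ((grad_second_symm φ hφ hφ' z v u).trans (real_inner_comm v (A u)))
    have CS : ∀ u v : E, ⟪u, A v⟫ ^ 2 ≤ ⟪u, A u⟫ * ⟪v, A v⟫ := by
      intro u v
      have hquad : ∀ t : ℝ, 0 ≤ ⟪v, A v⟫ * (t * t) + (2 * ⟪u, A v⟫) * t + ⟪u, A u⟫ := by
        intro t
        have h0 := (hHess z (u + t • v)).1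
        rw [← hA] at h0
        have e1 : A (u + t • v) = A u + t • A v := by
          rw [map_add, A.map_smul]
        rw [e1] at h0
        simp only [inner_add_left, inner_add_right, real_inner_smul_left,
          real_inner_smul_right] at h0
        rw [symm v u] at h0
        nlinarith [h0]
      have hd := discrim_le_zero hquad
      rw [discrim] at hd
      nlinarith [hd]
    apply ContinuousLinearMap.opNorm_le_bound _ hc
    intro v
    have h1 : ⟪A v, A v⟫ = ‖A v‖ ^ 2 := real_inner_self_eq_norm_sq (A v)
    have h2 := CS (A v) v
    have h3 := (hHess z (A v)).2; rw [← hA] at h3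
    have h4 := (hHess z v).2; rw [← hA] at h4
    have h3' := (hHess z (A v)).1; rw [← hA] at h3'
    have h4' := (hHess z v).1; rw [← hA] at h4'
    have h6 : ⟪v, A v⟫ = ⟪A v, v⟫ := real_inner_comm (A v) v
    have hsq : ‖A v‖ ^ 2 * ‖A v‖ ^ 2 ≤ (c * ‖v‖) ^ 2 * ‖A v‖ ^ 2 := by
      nlinarith [sq_nonneg ‖A v‖, sq_nonneg ‖v‖,
        mul_le_mul h3 h4 h4' (by positivity : (0:ℝ) ≤ c * ‖A v‖ ^ 2)]
    rcases eq_or_lt_of_le (norm_nonneg (A v)) with hz | hz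
    · rw [← hz]; positivity
    · have hp : (0:ℝ) < ‖A v‖ ^ 2 := by positivity
      have : ‖A v‖ ^ 2 ≤ (c * ‖v‖) ^ 2 := (mul_le_mul_iff_of_pos_right hp).mp hsq
      exact le_of_pow_le_pow_left₀ two_ne_zero (by positivity) this
  have := Convex.norm_image_sub_le_of_norm_fderiv_le (f := fun y => gradient φ y)
    (fun z _ => (hφ' z)) (fun z _ => key z) convex_univ (mem_univ x) (mem_univ y)
  simpa using this

end Aux

set_option maxHeartbeats 1000000 in
theorem stmt19 (d : ℕ) (κ : ℝ) (hκ : 0 < κ)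
    (φ : EuclideanSpace ℝ (Fin d) → ℝ)
    (hφ : Differentiable ℝ φ)
    (hφ' : Differentiable ℝ (fun x => gradient φ x))
    (hHess : ∀ x v : EuclideanSpace ℝ (Fin d),
      0 ≤ ⟪v, fderiv ℝ (fun y => gradient φ y) x v⟫ ∧
      ⟪v, fderiv ℝ (fun y => gradient φ y) x v⟫ ≤ (Real.sqrt κ)⁻¹ * ‖v‖ ^ 2)
    (ω : ℝ → EuclideanSpace ℝ (Fin d)) (hω : Continuous ω) (hω0 : ω 0 = 0)
    (h hdot : ℝ → EuclideanSpace ℝ (Fin d))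
    (hhdot_int : IntervalIntegrable hdot volume 0 1)
    (hhdot_sq : IntervalIntegrable (fun s => ‖hdot s‖ ^ 2) volume 0 1)
    (hh : ∀ t ∈ Set.Icc (0 : ℝ) 1, h t = ∫ s in (0 : ℝ)..t, hdot s) :
    ∃ g : ℝ → EuclideanSpace ℝ (Fin d),
      IntervalIntegrable g volume 0 1 ∧
      IntervalIntegrable (fun s => ‖g s‖ ^ 2) volume 0 1 ∧
      (∀ t ∈ Set.Icc (0 : ℝ) 1,
        OTmap d φ (ω + h) t - OTmap d φ ω t = ∫ s in (0 : ℝ)..t, g s) ∧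
      ∫ s in (0 : ℝ)..1, ‖g s‖ ^ 2 ≤
        (max ((Real.sqrt κ)⁻¹) 1) ^ 2 * ∫ s in (0 : ℝ)..1, ‖hdot s‖ ^ 2 := by
  have h01 : (0:ℝ) ≤ 1 := zero_le_one
  set c₀ : ℝ := (Real.sqrt κ)⁻¹ with hc₀def
  have hc₀ : 0 ≤ c₀ := by positivity
  set cv : EuclideanSpace ℝ (Fin d) :=
    gradient φ (ω 1 + h 1) - gradient φ (ω 1) - h 1 with hcv
  have hIuIoc : Set.uIoc (0:ℝ) 1 = Ioc (0:ℝ) 1 := uIoc_of_le h01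
  have hm : AEStronglyMeasurable hdot (volume.restrict (Set.uIoc (0:ℝ) 1)) := by
    rw [hIuIoc]; exact hhdot_int.aestronglyMeasurable
  -- integrability of the inner product with cv
  have hinner_int : IntervalIntegrable (fun s => ⟪cv, hdot s⟫) volume 0 1 := by
    apply (hhdot_int.norm.const_mul ‖cv‖).mono_fun
    · exact ((innerSL ℝ cv).continuous.comp_aestronglyMeasurable hm)
    · filter_upwards with s
      rw [Real.norm_eq_abs, Real.norm_eq_abs, abs_mul, abs_of_nonneg (norm_nonneg cv),
        abs_of_nonneg (norm_nonneg (hdot s))]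
      exact abs_real_inner_le_norm cv (hdot s)
  refine ⟨fun s => hdot s + cv, hhdot_int.add intervalIntegrable_const, ?_, ?_, ?_⟩
  · -- integrability of squared norm
    apply ((hhdot_sq.const_mul 2).add (intervalIntegrable_const
      (c := 2 * ‖cv‖ ^ 2))).mono_fun
    · exact ((continuous_pow 2).comp_aestronglyMeasurable
        ((hm.add aestronglyMeasurable_const).norm))
    · filter_upwards with s
      have hn := norm_add_le (hdot s) cv
      have h1 : ‖hdot s + cv‖ ^ 2 ≤ 2 * ‖hdot s‖ ^ 2 + 2 * ‖cv‖ ^ 2 := by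
        nlinarith [norm_nonneg (hdot s + cv), norm_nonneg (hdot s), norm_nonneg cv,
          sq_nonneg (‖hdot s‖ - ‖cv‖)]
      simp only [Real.norm_eq_abs]
      rw [abs_of_nonneg (by positivity : (0:ℝ) ≤ ‖hdot s + cv‖ ^ 2)]
      calc ‖hdot s + cv‖ ^ 2 ≤ 2 * ‖hdot s‖ ^ 2 + 2 * ‖cv‖ ^ 2 := h1
        _ ≤ |2 * ‖hdot s‖ ^ 2 + 2 * ‖cv‖ ^ 2| := le_abs_self _
  · -- fundamental theorem identity
    intro t ht
    have hsub : IntervalIntegrable hdot volume 0 t := by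
      apply hhdot_int.mono_set
      rw [uIcc_of_le ht.1, uIcc_of_le h01]
      exact Icc_subset_Icc le_rfl ht.2
    rw [intervalIntegral.integral_add hsub intervalIntegrable_const,
      intervalIntegral.integral_const, ← hh t ht]
    simp only [OTmap, Pi.add_apply, sub_zero, hcv]
    module
  · -- the quantitative bound
    set M : ℝ := max c₀ 1 with hM
    have hM1 : (1:ℝ) ≤ M := le_max_right _ _
    have hMc : c₀ ≤ M := le_max_left _ _
    set a : EuclideanSpace ℝ (Fin d) := h 1 with ha
    set B : ℝ := ∫ s in (0:ℝ)..1, ‖hdot s‖ ^ 2 with hB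
    have hint1 : (∫ s in (0:ℝ)..1, hdot s) = a := (hh 1 ⟨h01, le_rfl⟩).symm
    -- expand the square
    have expand : (∫ s in (0:ℝ)..1, ‖hdot s + cv‖ ^ 2)
        = B + 2 * ⟪cv, a⟫ + ‖cv‖ ^ 2 := by
      have e1 : (∫ s in (0:ℝ)..1, ‖hdot s + cv‖ ^ 2)
          = ∫ s in (0:ℝ)..1, (‖hdot s‖ ^ 2 + 2 * ⟪cv, hdot s⟫ + ‖cv‖ ^ 2) := by
        apply intervalIntegral.integral_congr
        intro s _
        dsimp only
        rw [norm_add_sq_real, real_inner_comm (hdot s) cv]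
      rw [e1, intervalIntegral.integral_add (hhdot_sq.add (hinner_int.const_mul 2))
        intervalIntegrable_const,
        intervalIntegral.integral_add hhdot_sq (hinner_int.const_mul 2),
        intervalIntegral.integral_const_mul, intervalIntegral.integral_const]
      have swap : (∫ s in (0:ℝ)..1, ⟪cv, hdot s⟫) = ⟪cv, a⟫ := by
        have := (innerSL ℝ cv).intervalIntegral_comp_comm hhdot_int
        simp only [innerSL_apply_apply] at this
        rw [this, hint1]
      rw [swap]
      simp [hB]
    -- Lipschitz bound on the gradient increment
    have key1 : ‖a + cv‖ ≤ c₀ * ‖a‖ := by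
      have heq : a + cv = gradient φ (ω 1 + h 1) - gradient φ (ω 1) := by
        rw [hcv, ha]; abel
      have := grad_lipschitz φ hφ hφ' hc₀ hHess (ω 1) (ω 1 + h 1)
      rw [heq]
      simpa using this
    -- Cauchy-Schwarz: ‖a‖² ≤ B
    have key2 : ‖a‖ ^ 2 ≤ B := by
      set μ : Measure ℝ := volume.restrict (Ioc (0:ℝ) 1) with hμ
      have hprob : IsProbabilityMeasure μ := by
        constructor
        rw [hμ, Measure.restrict_apply_univ, Real.volume_Ioc]
        norm_num
      have hf1 : Integrable (fun s => ‖hdot s‖) μ :=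
        (intervalIntegrable_iff_integrableOn_Ioc_of_le h01).mp hhdot_int.norm
      have hf2 : Integrable (fun s => ‖hdot s‖ ^ 2) μ :=
        (intervalIntegrable_iff_integrableOn_Ioc_of_le h01).mp hhdot_sq
      set m : ℝ := ∫ s, ‖hdot s‖ ∂μ with hmdef
      have hvar : 0 ≤ ∫ s, (‖hdot s‖ - m) ^ 2 ∂μ :=
        integral_nonneg fun s => sq_nonneg _
      have hexp : (∫ s, (‖hdot s‖ - m) ^ 2 ∂μ)
          = (∫ s, ‖hdot s‖ ^ 2 ∂μ) - 2 * m * m + m ^ 2 := by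
        have e : ∀ s : ℝ, (‖hdot s‖ - m) ^ 2
            = ‖hdot s‖ ^ 2 - (2 * m) * ‖hdot s‖ + m ^ 2 := by intro s; ring
        simp_rw [e]
        have i1 : Integrable (fun s => ‖hdot s‖ ^ 2 - 2 * m * ‖hdot s‖) μ := by
          exact hf2.sub (hf1.const_mul (2 * m))
        rw [integral_add i1 (integrable_const _),
          integral_sub hf2 (hf1.const_mul (2 * m)), integral_const_mul, integral_const]
        simp [measure_univ, hmdef]
      have hm2 : m ^ 2 ≤ ∫ s, ‖hdot s‖ ^ 2 ∂μ := by nlinarith [hvar, hexp]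
      have hnorm : ‖a‖ ≤ m := by
        rw [← hint1]
        calc ‖∫ s in (0:ℝ)..1, hdot s‖ ≤ ∫ s in (0:ℝ)..1, ‖hdot s‖ :=
          intervalIntegral.norm_integral_le_integral_norm h01
        _ = m := by rw [intervalIntegral.integral_of_le h01]
      have hBeq : B = ∫ s, ‖hdot s‖ ^ 2 ∂μ := by
        rw [hB, intervalIntegral.integral_of_le h01]
      have hm0 : 0 ≤ m := le_trans (norm_nonneg a) hnorm
      calc ‖a‖ ^ 2 ≤ m ^ 2 := by nlinarith [norm_nonneg a]
        _ ≤ B := hBeq ▸ hm2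
    -- conclude
    rw [expand]
    have hac : ‖a + cv‖ ^ 2 = ‖a‖ ^ 2 + 2 * ⟪a, cv⟫ + ‖cv‖ ^ 2 := norm_add_sq_real a cv
    have hcomm : ⟪cv, a⟫ = ⟪a, cv⟫ := real_inner_comm a cv
    have hac2 : ‖a + cv‖ ^ 2 ≤ M ^ 2 * ‖a‖ ^ 2 := by
      have h1 : ‖a + cv‖ ≤ M * ‖a‖ :=
        le_trans key1 (mul_le_mul_of_nonneg_right hMc (norm_nonneg a))
      nlinarith [norm_nonneg (a + cv), norm_nonneg a]
    rw [hcomm]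
    have hM2 : 1 ≤ M ^ 2 := by nlinarith
    have hfin : (M ^ 2 - 1) * ‖a‖ ^ 2 ≤ (M ^ 2 - 1) * B :=
      mul_le_mul_of_nonneg_left key2 (by linarith)
    linarith [hac, hac2, hfin]
end
end
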